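/- Let n ≥ 1, L ≥ 1, r_0 > 0 and set r = 4(n−1)(2L+r_0) + 2L. If y ∈ (Z^d)^n satisfies ‖y‖_∞ ≥ 2r (i.e., y ∉ Λ_{2r}(0)), then for every x ∈ (Z^d)^n with ‖x‖_∞ < r, the cubes Λ_L(y) and Λ_L(x) are separable. -/

import Mathlib

/-!
Let `j₀` be a coordinate with `‖y_{j₀}‖ ≥ 2r`. The `n` consecutive bands `[r + 2Lm, r + 2L(m+1))`,
`m < n`, all lie in `[r, 2r]`, and only the `n - 1` other coordinates of `y` can meet them, so one
band `[a, a + 2L)` contains no `‖y_k‖`. Taking `J = {j : ‖y_j‖ ≥ a + 2L}`, every `y_j` with `j ∈ J`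
is at distance `≥ 2L` from every `y_k` with `k ∉ J` (these have `‖y_k‖ < a`) and from every `x_k`
(these have `‖x_k‖ < r ≤ a`), so the corresponding `L`-cubes are disjoint.
-/

/-- The projection `Π_J Λ_L(u) = ⋃_{j∈J} Λ_L(u_j) ⊂ ℝ^d`, where `Λ_L(v)` is the
open sup-norm cube of radius `L` around `v` (`Fin d → ℝ` carries the sup norm). -/
def piProj (d n : ℕ) (L : ℝ) (u : Fin n → Fin d → ℤ) (J : Finset (Fin n)) :
    Set (Fin d → ℝ) :=
  ⋃ j ∈ J, Metric.ball (fun i => ((u j i : ℝ))) L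

/-- Cubes `Λ_L(u)` and `Λ_L(v)` are pre-separable if for some nonempty
`J ⊆ {1,…,n}` and one of the two orderings,
`Π_J Λ_L(u) ∩ (Π_{J^c} Λ_L(u) ∪ Π Λ_L(v)) = ∅`. -/
def PreSeparable (d n : ℕ) (L : ℝ) (u v : Fin n → Fin d → ℤ) : Prop :=
  ∃ J : Finset (Fin n), J.Nonempty ∧
    (piProj d n L u J ∩ (piProj d n L u Jᶜ ∪ piProj d n L v Finset.univ) = ∅ ∨
     piProj d n L v J ∩ (piProj d n L v Jᶜ ∪ piProj d n L u Finset.univ) = ∅)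

open Finset Metric

lemma dist_intCast_pi {ι : Type*} [Fintype ι] (u v : ι → ℤ) :
    dist (fun i => (u i : ℝ)) (fun i => (v i : ℝ)) = dist u v := by
  rw [dist_eq_norm, dist_eq_norm]
  exact congrArg norm (funext fun i => (Int.cast_sub (u i) (v i)).symm)

lemma piProj_inter_piProj_eq_empty {d n : ℕ} {L : ℝ} {u v : Fin n → Fin d → ℤ}
    {J K : Finset (Fin n)} (h : ∀ j ∈ J, ∀ k ∈ K, 2 * L ≤ dist (u j) (v k)) :
    piProj d n L u J ∩ piProj d n L v K = ∅ := by
  rw [← Set.disjoint_iff_inter_eq_empty]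
  simp only [piProj, Set.disjoint_iUnion_left, Set.disjoint_iUnion_right]
  intro k hk j hj
  exact ball_disjoint_ball (by rw [dist_intCast_pi]; linarith [h j hj k hk])

lemma preSeparable_of_norm_gap {d n : ℕ} {L a : ℝ} {u v : Fin n → Fin d → ℤ}
    {J : Finset (Fin n)} (hJ : J.Nonempty) (hin : ∀ j ∈ J, a + 2 * L ≤ ‖u j‖)
    (hout : ∀ k ∉ J, ‖u k‖ ≤ a) (hv : ‖v‖ ≤ a) : PreSeparable d n L u v := by
  have hsep : ∀ j ∈ J, ∀ w : Fin d → ℤ, ‖w‖ ≤ a → 2 * L ≤ dist (u j) w := by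
    intro j hj w hw
    rw [dist_eq_norm]
    linarith [hin j hj, norm_sub_norm_le (u j) w]
  refine ⟨J, hJ, Or.inl ?_⟩
  rw [Set.inter_union_distrib_left,
    piProj_inter_piProj_eq_empty fun j hj k hk => hsep j hj _ (hout k (mem_compl.1 hk)),
    piProj_inter_piProj_eq_empty fun j hj k _ => hsep j hj _ ((norm_le_pi_norm v k).trans hv),
    Set.union_empty]

lemma exists_lt_card_forall_notMem_Ico {ι : Type*} [Fintype ι] (f : ι → ℝ) (j₀ : ι) (c w : ℝ) :
    ∃ m < Fintype.card ι, ∀ k ≠ j₀, f k ∉ Set.Ico (c + w * m) (c + w * m + w) := by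
  classical
  have hcard : 0 < Fintype.card ι := Fintype.card_pos_iff.2 ⟨j₀⟩
  rcases le_or_gt w 0 with hw | hw
  · exact ⟨0, hcard, fun k _ => by rw [Set.Ico_eq_empty (by linarith)]; exact id⟩
  -- `f k` can only lie in band number `⌊(f k - c) / w⌋₊`; fewer than `card ι` such `k` compete
  have hlt : #((univ.erase j₀).image fun k => ⌊(f k - c) / w⌋₊) < #(range (Fintype.card ι)) := by
    refine card_image_le.trans_lt ?_
    rw [card_erase_of_mem (mem_univ _), card_univ, card_range]
    omega
  obtain ⟨m, hm, hmiss⟩ := exists_mem_notMem_of_card_lt_card hlt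
  refine ⟨m, mem_range.1 hm, fun k hk hband => hmiss (mem_image.2 ⟨k, by simpa using hk, ?_⟩)⟩
  obtain ⟨hlo, hhi⟩ := hband
  have hlo' : (m : ℝ) ≤ (f k - c) / w := by rw [le_div_iff₀ hw]; linarith
  rw [Nat.floor_eq_iff ((Nat.cast_nonneg m).trans hlo')]
  exact ⟨hlo', by rw [div_lt_iff₀ hw]; linarith⟩

lemma preSeparable_of_norm_le_of_le_norm {d n : ℕ} {L c : ℝ} {u v : Fin n → Fin d → ℤ}
    {j₀ : Fin n} (hL : 0 ≤ L) (hv : ‖v‖ ≤ c) (hu : c + 2 * L * n ≤ ‖u j₀‖) :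
    PreSeparable d n L u v := by
  obtain ⟨m, hm, hfree⟩ := exists_lt_card_forall_notMem_Ico (fun j => ‖u j‖) j₀ c (2 * L)
  rw [Fintype.card_fin] at hm
  set a := c + 2 * L * m
  have hca : c ≤ a := le_add_of_nonneg_right (by positivity)
  have ha : a + 2 * L ≤ ‖u j₀‖ := by
    have : (m : ℝ) + 1 ≤ n := by exact_mod_cast hm
    nlinarith
  refine preSeparable_of_norm_gap (J := univ.filter fun j => a + 2 * L ≤ ‖u j‖)
    ⟨j₀, by simpa using ha⟩ (fun j hj => (mem_filter.1 hj).2) (fun k hk => ?_) (hv.trans hca)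
  have hk₀ : k ≠ j₀ := by rintro rfl; exact hk (by simpa using ha)
  simp only [mem_filter, mem_univ, true_and, not_le] at hk
  by_contra! hak
  exact hfree k hk₀ ⟨hak.le, hk⟩

theorem stmt4_general (d n : ℕ) (hn : 1 ≤ n) (L : ℕ) (r0 : ℝ) (hr0 : 0 < r0)
    (r : ℝ) (hr : r = 4 * ((n : ℝ) - 1) * (2 * L + r0) + 2 * L)
    (y : Fin n → Fin d → ℤ) (hy : 2 * r ≤ ‖y‖) :
    ∀ x : Fin n → Fin d → ℤ, ‖x‖ < r →
      PreSeparable d n L y x ∧ r ≤ ‖y - x‖ := by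
  intro x hx
  refine ⟨?_, by linarith [norm_sub_norm_le y x]⟩
  have : Nonempty (Fin n) := ⟨⟨0, hn⟩⟩
  obtain ⟨j₀, hj₀⟩ := Finite.exists_max fun j => ‖y j‖
  have hyj₀ : 2 * r ≤ ‖y j₀‖ := hy.trans ((pi_norm_le_iff_of_nonneg (norm_nonneg _)).2 hj₀)
  have hband : r + 2 * L * n ≤ 2 * r := by
    have : (1 : ℝ) ≤ n := by exact_mod_cast hn
    nlinarith
  exact preSeparable_of_norm_le_of_le_norm (by positivity) hx.le (hband.trans hyj₀)

/-- With `r = 4(n−1)(2L+r₀) + 2L`, if `‖y‖_∞ ≥ 2r` (i.e.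
`y ∉ Λ_{2r}(0)`), then for every `x` with `‖x‖_∞ < r` the cubes `Λ_L(y)` and
`Λ_L(x)` are separable: pre-separable and `‖y − x‖_∞ ≥ r`. -/
theorem stmt4 (d n : ℕ) (hn : 1 ≤ n) (L : ℕ) (hL : 1 ≤ L) (r0 : ℝ) (hr0 : 0 < r0)
    (r : ℝ) (hr : r = 4 * ((n : ℝ) - 1) * (2 * L + r0) + 2 * L)
    (y : Fin n → Fin d → ℤ) (hy : 2 * r ≤ ‖y‖) :
    ∀ x : Fin n → Fin d → ℤ, ‖x‖ < r →
      PreSeparable d n L y x ∧ r ≤ ‖y - x‖ :=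
  stmt4_general d n hn L r0 hr0 r hr y hy
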